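/- Let m ≥ 1 and let G₁, …, G_m be simple graphs and k₁, …, k_m natural numbers such that each G_i is k_i-Ramsey. Then the iterated Naor product G₁ · (G₂ · ( ⋯ · G_m)) is (k₁·k₂···k_m)-Ramsey. -/

import Mathlib

universe u

/-- The Naor product of two simple graphs: vertices `(u₁,u₂)` and `(v₁,v₂)` are adjacent
iff `u₁` is adjacent to `v₁` in `G₁`, or `u₁ = v₁` and `u₂` is adjacent to `v₂` in `G₂`. -/
def naorProd {V₁ V₂ : Type*} (G₁ : SimpleGraph V₁) (G₂ : SimpleGraph V₂) :
    SimpleGraph (V₁ × V₂) where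
  Adj x y := G₁.Adj x.1 y.1 ∨ (x.1 = y.1 ∧ G₂.Adj x.2 y.2)
  symm := by
    constructor
    rintro ⟨u₁, u₂⟩ ⟨v₁, v₂⟩ (h | ⟨h₁, h₂⟩)
    · exact Or.inl h.symm
    · exact Or.inr ⟨h₁.symm, h₂.symm⟩
  loopless := by
    constructor
    rintro ⟨u₁, u₂⟩ (h | ⟨-, h⟩)
    · exact G₁.irrefl h
    · exact G₂.irrefl h

/-- The vertex type of the iterated (right-folded) Naor product of `m+1` graphs. -/
def naorVertex : (m : ℕ) → (Fin (m + 1) → Type u) → Type u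
  | 0, V => V 0
  | m + 1, V => V 0 × naorVertex m (fun i => V i.succ)

/-- The iterated (right-folded) Naor product `G₀ · (G₁ · ( ⋯ · G_m))` of `m+1` graphs. -/
def iterNaorProd : (m : ℕ) → (V : Fin (m + 1) → Type u) →
    ((i : Fin (m + 1)) → SimpleGraph (V i)) → SimpleGraph (naorVertex m V)
  | 0, _, G => G 0
  | m + 1, V, G => naorProd (G 0) (iterNaorProd m (fun i => V i.succ) (fun i => G i.succ))

/-- A simple graph is `k`-Ramsey if it has no clique of size `k` and no
independent set of size `k`. -/
def IsRamsey {V : Type*} (G : SimpleGraph V) (k : ℕ) : Prop :=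
  G.CliqueFree k ∧ Gᶜ.CliqueFree k

/-! A clique of `G₁ · G₂` projects onto a clique of `G₁`, and each of its fibres over a vertex
of `G₁` is a clique of `G₂`; hence it has at most `(a - 1) * (b - 1) < a * b` vertices when
`G₁` is `a`-clique-free and `G₂` is `b`-clique-free. Complementation commutes with the Naor
product, so the same bound holds for independent sets, and induction on the number of factors
finishes the proof. -/

open Finset SimpleGraph

theorem SimpleGraph.IsClique.card_lt_of_cliqueFree {α : Type*} {G : SimpleGraph α} {n : ℕ}
    (hG : G.CliqueFree n) {s : Finset α} (hs : G.IsClique (s : Set α)) : #s < n := by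
  by_contra! hn
  obtain ⟨t, hts, rfl⟩ := exists_subset_card_eq hn
  exact hG t ⟨hs.subset hts, rfl⟩

section NaorProd

variable {V₁ V₂ : Type*} {G₁ : SimpleGraph V₁} {G₂ : SimpleGraph V₂}

theorem compl_naorProd (G₁ : SimpleGraph V₁) (G₂ : SimpleGraph V₂) :
    (naorProd G₁ G₂)ᶜ = naorProd G₁ᶜ G₂ᶜ := by
  ext ⟨x₁, x₂⟩ ⟨y₁, y₂⟩
  by_cases h : x₁ = y₁
  · subst h
    simp [naorProd]
  · simp [naorProd, h]

theorem isClique_image_fst_of_isClique_naorProd {s : Set (V₁ × V₂)}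
    (hs : (naorProd G₁ G₂).IsClique s) : G₁.IsClique (Prod.fst '' s) := by
  rintro _ ⟨x, hx, rfl⟩ _ ⟨y, hy, rfl⟩ hne
  rcases hs hx hy (fun h => hne (congrArg Prod.fst h)) with hadj | ⟨heq, -⟩
  · exact hadj
  · exact absurd heq hne

theorem isClique_image_snd_fiber_of_isClique_naorProd {s : Set (V₁ × V₂)}
    (hs : (naorProd G₁ G₂).IsClique s) (t : V₁) :
    G₂.IsClique (Prod.snd '' {x ∈ s | x.1 = t}) := by
  rintro _ ⟨x, ⟨hx, hxt⟩, rfl⟩ _ ⟨y, ⟨hy, hyt⟩, rfl⟩ hne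
  rcases hs hx hy (fun h => hne (congrArg Prod.snd h)) with hadj | ⟨-, hadj⟩
  · exact absurd (hxt.trans hyt.symm) (G₁.ne_of_adj hadj)
  · exact hadj

theorem SimpleGraph.CliqueFree.naorProd {a b : ℕ} (h₁ : G₁.CliqueFree a)
    (h₂ : G₂.CliqueFree b) :
    (naorProd G₁ G₂).CliqueFree (a * b) := by
  classical
  intro s hs
  have ha : 0 < a := Nat.pos_of_ne_zero (by rintro rfl; exact not_cliqueFree_zero h₁)
  have hb : 0 < b := Nat.pos_of_ne_zero (by rintro rfl; exact not_cliqueFree_zero h₂)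
  have hproj : #(s.image Prod.fst) < a := by
    refine IsClique.card_lt_of_cliqueFree h₁ ?_
    simpa only [coe_image] using isClique_image_fst_of_isClique_naorProd hs.1
  have hfiber : ∀ t ∈ s.image Prod.fst, #{x ∈ s | x.1 = t} ≤ b - 1 := by
    intro t _
    have hinj : Set.InjOn Prod.snd (({x ∈ s | x.1 = t} : Finset _) : Set (V₁ × V₂)) := by
      intro x hx y hy hxy
      rw [mem_coe, mem_filter] at hx hy
      exact Prod.ext (hx.2.trans hy.2.symm) hxy
    have hclique : G₂.IsClique (({x ∈ s | x.1 = t}.image Prod.snd : Finset V₂) : Set V₂) := by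
      rw [coe_image, coe_filter]
      exact isClique_image_snd_fiber_of_isClique_naorProd hs.1 t
    have := hclique.card_lt_of_cliqueFree h₂
    rw [card_image_of_injOn hinj] at this
    omega
  have hcard : #s < a * b :=
    calc #s ≤ (b - 1) * #(s.image Prod.fst) := card_le_mul_card_image s (b - 1) hfiber
      _ ≤ (b - 1) * (a - 1) := by gcongr; omega
      _ < a * b := by rw [mul_comm a]; exact Nat.mul_lt_mul'' (by omega) (by omega)
  exact hcard.ne hs.2

theorem IsRamsey.naorProd {a b : ℕ} (h₁ : IsRamsey G₁ a) (h₂ : IsRamsey G₂ b) :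
    IsRamsey (naorProd G₁ G₂) (a * b) :=
  ⟨h₁.1.naorProd h₂.1, compl_naorProd G₁ G₂ ▸ h₁.2.naorProd h₂.2⟩

end NaorProd

/-- If `G i` is `k i`-Ramsey for each of the `m+1` graphs `G 0, …, G m`, then their
iterated Naor product is `(∏ i, k i)`-Ramsey. -/
theorem iterNaorProd_isRamsey (m : ℕ) (V : Fin (m + 1) → Type u)
    (G : (i : Fin (m + 1)) → SimpleGraph (V i)) (k : Fin (m + 1) → ℕ)
    (h : ∀ i, IsRamsey (G i) (k i)) :
    IsRamsey (iterNaorProd m V G) (∏ i, k i) := by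
  induction m with
  | zero => rw [Fin.prod_univ_one]; exact h 0
  | succ m ih =>
    rw [Fin.prod_univ_succ]
    exact (h 0).naorProd (ih _ _ _ fun i => h i.succ)
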